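/- arXiv:2105.13019 — 3 statements merged into one kernel-verified Lean document; each statement's English description precedes it below -/
import Mathlib

section
/- Let $n \geq 1$ and $m \geq 0$ be integers and define the kernel $$k(t) = (-1)^n\,\frac{2^{n-1}}{\sqrt{\pi}}\sum_{j=0}^m (2n+4j+1)\,\Gamma\!\left(n+j+\tfrac{1}{2}\right)\frac{(-1)^j}{j!}\,P_{n+2j}(t).$$ If $f : \mathbb{R} \to \mathbb{R}$ is $n$-times continuously differentiable on a neighborhood of $x \in \mathbb{R}$, then $$f^{(n)}(x) = \lim_{h \to 0^+}\left(-\frac{1}{h}\right)^{n}\int_{-1}^1 k(t)\,f(x+ht)\,dt.$$ -/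
/-!
Through Rodrigues' formula and repeated integration by parts, `P_N` is orthogonal to all
polynomials of degree `< N`, and `∫ P_N t^N dt = 2^(N+1) (N!)² / (2N+1)!`. Hence the moments
`∫ k(t) t^p dt` vanish for `p < n`, and for `p = n` only the `j = 0` term of `k` contributes,
which the factor `Γ(n + 1/2)` normalises to `(-1)^n n!`. Inserting the Peano form of Taylor's
theorem `f(x + u) = ∑_{p ≤ n} f^(p)(x) u^p / p! + o(u^n)` into `∫ k(t) f(x + h t) dt`, the
moment conditions leave `(-h)^n f^(n)(x) + o(h^n)`.
-/

open Real Filter Finset intervalIntegral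

/-- Legendre polynomial of degree `n` (Rodrigues formula), the orthogonal polynomial
on `[-1,1]` with weight `1` normalized by `P n 1 = 1`. -/
noncomputable def legendreP (n : ℕ) : ℝ → ℝ :=
  fun x => (1 / ((2:ℝ) ^ n * (Nat.factorial n : ℝ))) *
    iteratedDeriv n (fun y : ℝ => (y ^ 2 - 1) ^ n) x

/-- The kernel `k(t)` of the extended orthogonal derivative. -/
noncomputable def kker (n m : ℕ) (t : ℝ) : ℝ :=
  (-1:ℝ)^n * ((2:ℝ)^(n-1) / Real.sqrt Real.pi) *
    ∑ j ∈ Finset.range (m+1),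
      (2*(n:ℝ) + 4*(j:ℝ) + 1) * Real.Gamma ((n:ℝ) + (j:ℝ) + 1/2) *
        ((-1:ℝ)^j / (Nat.factorial j : ℝ)) * legendreP (n + 2*j) t

open scoped Nat
open Polynomial

theorem Polynomial.iteratedDeriv_eval {𝕜 : Type*} [NontriviallyNormedField 𝕜] (k : ℕ)
    (p : 𝕜[X]) :
    iteratedDeriv k (fun y : 𝕜 => p.eval y) = fun y => (derivative^[k] p).eval y := by
  induction k generalizing p with
  | zero => simp
  | succ k ih =>
    rw [iteratedDeriv_succ, ih]
    funext y
    rw [Function.iterate_succ_apply']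
    exact Polynomial.deriv _

theorem Polynomial.isRoot_iterate_derivative_of_pow_dvd {R : Type*} [CommRing R] {p : R[X]}
    {a : R} {N k : ℕ} (h : (X - C a) ^ N ∣ p) (hk : k < N) : (derivative^[k] p).IsRoot a :=
  dvd_iff_isRoot.mp <| (dvd_pow_self _ (Nat.sub_ne_zero_of_lt hk)).trans
    (pow_sub_dvd_iterate_derivative_of_pow_dvd _ h)

theorem Polynomial.integral_derivative_mul_eq_neg {a b : ℝ} {q : ℝ[X]} (ha : q.IsRoot a)
    (hb : q.IsRoot b) (r : ℝ[X]) :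
    ∫ t in a..b, (derivative q).eval t * r.eval t
      = -∫ t in a..b, q.eval t * (derivative r).eval t := by
  have parts := integral_deriv_mul_eq_sub (fun t _ => q.hasDerivAt t) (fun t _ => r.hasDerivAt t)
    ((derivative q).continuous.intervalIntegrable a b)
    ((derivative r).continuous.intervalIntegrable a b)
  rw [integral_add (Continuous.intervalIntegrable (by fun_prop) a b)
    (Continuous.intervalIntegrable (by fun_prop) a b), ha.eq_zero, hb.eq_zero] at parts
  linarith

theorem Polynomial.integral_iterate_derivative_mul {a b : ℝ} (p : ℕ) {q : ℝ[X]}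
    (hq : ∀ k < p, (derivative^[k] q).IsRoot a ∧ (derivative^[k] q).IsRoot b) (r : ℝ[X]) :
    ∫ t in a..b, (derivative^[p] q).eval t * r.eval t
      = (-1) ^ p * ∫ t in a..b, q.eval t * (derivative^[p] r).eval t := by
  induction p generalizing q with
  | zero => simp
  | succ p ih =>
    obtain ⟨ha, hb⟩ : q.IsRoot a ∧ q.IsRoot b := hq 0 p.succ_pos
    rw [Function.iterate_succ_apply, ih fun k hk => hq (k + 1) (by omega),
      integral_derivative_mul_eq_neg ha hb,
      ← Function.iterate_succ_apply' derivative, pow_succ]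
    ring

theorem isRoot_iterate_derivative_sq_sub_one_pow {R : Type*} [CommRing R] {N k : ℕ}
    (hk : k < N) :
    (derivative^[k] ((X ^ 2 - 1) ^ N : R[X])).IsRoot (-1) ∧
      (derivative^[k] ((X ^ 2 - 1) ^ N : R[X])).IsRoot 1 := by
  have hfactor : ((X ^ 2 - 1) ^ N : R[X]) = (X - C 1) ^ N * (X - C (-1)) ^ N := by
    rw [← mul_pow]; simp only [map_one, map_neg]; ring
  exact ⟨isRoot_iterate_derivative_of_pow_dvd (hfactor ▸ dvd_mul_left _ _) hk,
    isRoot_iterate_derivative_of_pow_dvd (hfactor ▸ dvd_mul_right _ _) hk⟩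

theorem integral_sq_sub_one_pow_succ (N : ℕ) :
    ∫ t in (-1:ℝ)..1, (t ^ 2 - 1) ^ (N + 1)
      = -((2 * (N : ℝ) + 2) / (2 * N + 3)) * ∫ t in (-1:ℝ)..1, (t ^ 2 - 1) ^ N := by
  have hderiv : ∀ t : ℝ, HasDerivAt (fun t : ℝ => t * (t ^ 2 - 1) ^ (N + 1))
      ((2 * (N : ℝ) + 3) * (t ^ 2 - 1) ^ (N + 1) + (2 * N + 2) * (t ^ 2 - 1) ^ N) t := by
    intro t
    refine ((hasDerivAt_id t).fun_mul
      (((hasDerivAt_pow 2 t).sub_const 1).fun_pow (N + 1))).congr_deriv ?_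
    simp only [id, Nat.add_sub_cancel]
    push_cast
    ring
  have hftc := integral_eq_sub_of_hasDerivAt (fun t _ => hderiv t)
    (Continuous.intervalIntegrable (by fun_prop) (-1) 1)
  rw [integral_add (Continuous.intervalIntegrable (by fun_prop) _ _)
    (Continuous.intervalIntegrable (by fun_prop) _ _), integral_const_mul,
    integral_const_mul] at hftc
  field_simp
  norm_num at hftc
  linarith

theorem integral_sq_sub_one_pow (N : ℕ) :
    ∫ t in (-1:ℝ)..1, (t ^ 2 - 1) ^ N
      = (-1) ^ N * (2 ^ (2 * N + 1) * (N ! : ℝ) ^ 2 / (2 * N + 1)!) := by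
  induction N with
  | zero => norm_num
  | succ N ih =>
    rw [integral_sq_sub_one_pow_succ, ih, show 2 * (N + 1) + 1 = 2 * N + 1 + 1 + 1 by ring,
      Nat.factorial_succ (2 * N + 1 + 1), Nat.factorial_succ (2 * N + 1), Nat.factorial_succ N]
    push_cast
    field_simp
    ring

theorem legendreP_eq_eval (N : ℕ) (t : ℝ) :
    legendreP N t
      = (2 ^ N * (N ! : ℝ))⁻¹ * (derivative^[N] ((X ^ 2 - 1) ^ N : ℝ[X])).eval t := by
  have hQ : (fun y : ℝ => (y ^ 2 - 1) ^ N) = fun y => ((X ^ 2 - 1) ^ N : ℝ[X]).eval y := by simp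
  rw [legendreP, one_div, hQ, Polynomial.iteratedDeriv_eval]

@[fun_prop]
theorem continuous_legendreP (N : ℕ) : Continuous (legendreP N) := by
  simp only [funext (legendreP_eq_eval N)]
  fun_prop

theorem integral_legendreP_mul_pow (N p : ℕ) :
    ∫ t in (-1:ℝ)..1, legendreP N t * t ^ p
      = (2 ^ N * (N ! : ℝ))⁻¹ * (-1) ^ N *
          ∫ t in (-1:ℝ)..1, (t ^ 2 - 1) ^ N * (derivative^[N] (X ^ p : ℝ[X])).eval t := by
  have hmoment := integral_iterate_derivative_mul N
    (fun k hk => isRoot_iterate_derivative_sq_sub_one_pow hk) (X ^ p : ℝ[X])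
  simp only [eval_pow, eval_sub, eval_X, eval_one] at hmoment
  simp only [legendreP_eq_eval, mul_assoc, integral_const_mul, hmoment]

theorem integral_legendreP_mul_pow_of_lt {N p : ℕ} (hp : p < N) :
    ∫ t in (-1:ℝ)..1, legendreP N t * t ^ p = 0 := by
  rw [integral_legendreP_mul_pow, iterate_derivative_eq_zero (by simpa using hp)]
  simp

theorem integral_legendreP_mul_pow_self (N : ℕ) :
    ∫ t in (-1:ℝ)..1, legendreP N t * t ^ N = 2 ^ (N + 1) * (N ! : ℝ) ^ 2 / (2 * N + 1)! := by
  rw [integral_legendreP_mul_pow, iterate_derivative_X_pow_eq_C_mul, Nat.sub_self,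
    Nat.descFactorial_self]
  simp only [pow_zero, mul_one, eval_C, integral_mul_const, integral_sq_sub_one_pow]
  rw [show 2 ^ (2 * N + 1) = (2:ℝ) ^ N * 2 ^ (N + 1) by ring]
  field_simp
  rw [← pow_mul, pow_mul', neg_one_sq, one_pow]

theorem integral_kker_mul_pow (n m p : ℕ) :
    ∫ t in (-1:ℝ)..1, kker n m t * t ^ p
      = (-1) ^ n * (2 ^ (n - 1) / √π) * ∑ j ∈ range (m + 1),
          (2 * (n : ℝ) + 4 * j + 1) * Gamma (n + j + 1 / 2) * ((-1) ^ j / (j ! : ℝ)) *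
            ∫ t in (-1:ℝ)..1, legendreP (n + 2 * j) t * t ^ p := by
  simp only [kker, mul_assoc, Finset.sum_mul, integral_const_mul]
  rw [integral_finsetSum fun j _ => Continuous.intervalIntegrable (by fun_prop) _ _]
  simp only [integral_const_mul]

theorem integral_kker_mul_pow_of_lt {n p : ℕ} (m : ℕ) (hp : p < n) :
    ∫ t in (-1:ℝ)..1, kker n m t * t ^ p = 0 := by
  rw [integral_kker_mul_pow, Finset.sum_eq_zero fun j _ => by
    rw [integral_legendreP_mul_pow_of_lt (by omega), mul_zero], mul_zero]

theorem integral_kker_mul_pow_self {n : ℕ} (m : ℕ) (hn : 1 ≤ n) :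
    ∫ t in (-1:ℝ)..1, kker n m t * t ^ n = (-1) ^ n * (n ! : ℝ) := by
  rw [integral_kker_mul_pow, Finset.sum_eq_single_of_mem 0 (by simp) fun j _ hj => by
    rw [integral_legendreP_mul_pow_of_lt (by omega), mul_zero]]
  obtain ⟨k, rfl⟩ : ∃ k, n = k + 1 := ⟨n - 1, by omega⟩
  have hfac :
      ((2 * (k + 1) + 1)! : ℝ) = (2 * k + 3) * (2 * k + 1)‼ * (2 ^ (k + 1) * (k + 1)!) := by
    rw [Nat.factorial_succ, show 2 * (k + 1) = 2 * k + 1 + 1 by ring,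
      Nat.factorial_eq_mul_doubleFactorial, ← show 2 * (k + 1) = 2 * k + 1 + 1 by ring,
      Nat.doubleFactorial_two_mul]
    push_cast
    ring
  simp only [CharP.cast_eq_zero, mul_zero, add_zero, pow_zero, Nat.factorial_zero, Nat.cast_one,
    div_one, mul_one, integral_legendreP_mul_pow_self, Real.Gamma_nat_add_half, hfac,
    show 2 * (k + 1) - 1 = 2 * k + 1 by omega, Nat.add_sub_cancel]
  field_simp
  push_cast
  ring

theorem continuous_kker (n m : ℕ) : Continuous (kker n m) := by
  unfold kker
  fun_prop

open Asymptotics Topology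
open MeasureTheory (volume ae_of_all)

theorem isLittleO_sub_taylor_comp_add {f : ℝ → ℝ} {x ε : ℝ} (hε : 0 < ε) {n : ℕ}
    (hf : ContDiffOn ℝ n f (Metric.ball x ε)) :
    (fun u => f (x + u) - ∑ p ∈ range (n + 1), iteratedDeriv p f x / p ! * u ^ p)
      =o[𝓝 0] (· ^ n) := by
  have hx : x ∈ Metric.ball x ε := Metric.mem_ball_self hε
  have htaylor := taylor_isLittleO (convex_ball x ε) hx hf
  rw [Metric.isOpen_ball.nhdsWithin_eq hx] at htaylor
  have hshift : Tendsto (x + ·) (𝓝 0) (𝓝 x) :=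
    (continuous_const_add x).tendsto' 0 x (add_zero x)
  refine (htaylor.comp_tendsto hshift).congr (fun u => ?_) (fun u => by simp)
  simp only [Function.comp, taylor_within_apply, add_sub_cancel_left, smul_eq_mul,
    iteratedDerivWithin_of_isOpen Metric.isOpen_ball hx]
  congr 1
  exact Finset.sum_congr rfl fun p _ => by ring

section MomentKernel

variable {K : ℝ → ℝ} {n : ℕ}

theorem integral_mul_sum_pow_of_moments_eq_zero (hK : IntervalIntegrable K volume (-1) 1)
    (hmom : ∀ p < n, ∫ t in (-1:ℝ)..1, K t * t ^ p = 0) (a : ℕ → ℝ) (h : ℝ) :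
    ∫ t in (-1:ℝ)..1, K t * ∑ p ∈ range (n + 1), a p * (h * t) ^ p
      = a n * h ^ n * ∫ t in (-1:ℝ)..1, K t * t ^ n := by
  have hterm : ∀ p, ∫ t in (-1:ℝ)..1, K t * (a p * (h * t) ^ p)
      = a p * h ^ p * ∫ t in (-1:ℝ)..1, K t * t ^ p := fun p => by
    rw [← integral_const_mul]
    exact integral_congr fun t _ => by ring
  simp only [Finset.mul_sum]
  rw [integral_finsetSum fun p _ => hK.mul_continuousOn (by fun_prop), Finset.sum_range_succ,
    Finset.sum_eq_zero fun p hp => by rw [hterm, hmom p (Finset.mem_range.mp hp), mul_zero],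
    zero_add, hterm]

theorem isLittleO_integral_mul_comp_mul (hK : IntervalIntegrable K volume (-1) 1) {R : ℝ → ℝ}
    (hR : R =o[𝓝 0] (· ^ n)) :
    (fun h => ∫ t in (-1:ℝ)..1, K t * R (h * t)) =o[𝓝[>] 0] (· ^ n) := by
  set C := ∫ t in (-1:ℝ)..1, |K t|
  have hC : 0 ≤ C := integral_nonneg (by norm_num) fun t _ => abs_nonneg _
  refine isLittleO_iff.2 fun c hc => ?_
  obtain ⟨δ, hδ, hRδ⟩ := Metric.eventually_nhds_iff.1 (isLittleO_iff.1 hR (c := c / (C + 1))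
    (by positivity))
  filter_upwards [Ioo_mem_nhdsGT hδ] with h ⟨hh0, hhδ⟩
  have hpointwise :
      ∀ t ∈ Set.Ioc (-1:ℝ) 1, ‖K t * R (h * t)‖ ≤ |K t| * (c / (C + 1) * h ^ n) := by
    intro t ⟨ht₁, ht₂⟩
    have ht : |t| ≤ 1 := abs_le.2 ⟨ht₁.le, ht₂⟩
    have hht : |h * t| ≤ h := by rw [abs_mul, abs_of_pos hh0]; nlinarith
    rw [norm_mul, Real.norm_eq_abs]
    refine mul_le_mul_of_nonneg_left ?_ (abs_nonneg _)
    refine (hRδ (by simpa using hht.trans_lt hhδ)).trans ?_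
    rw [norm_pow, Real.norm_eq_abs]
    gcongr
  calc ‖∫ t in (-1:ℝ)..1, K t * R (h * t)‖
      ≤ ∫ t in (-1:ℝ)..1, |K t| * (c / (C + 1) * h ^ n) :=
        norm_integral_le_of_norm_le (by norm_num) (ae_of_all _ hpointwise) (hK.abs.mul_const _)
    _ = c * (C / (C + 1)) * ‖h ^ n‖ := by
        rw [integral_mul_const, norm_pow, Real.norm_eq_abs, abs_of_pos hh0]
        ring
    _ ≤ c * ‖h ^ n‖ := by
        gcongr
        exact mul_le_of_le_one_right hc.le ((div_le_one (by positivity)).2 (by linarith))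

theorem tendsto_integral_mul_comp_div_pow (hK : IntervalIntegrable K volume (-1) 1)
    (hmom : ∀ p < n, ∫ t in (-1:ℝ)..1, K t * t ^ p = 0) {f : ℝ → ℝ} {x ε : ℝ}
    (hε : 0 < ε) (hf : ContDiffOn ℝ n f (Metric.ball x ε)) :
    Tendsto (fun h => (h ^ n)⁻¹ * ∫ t in (-1:ℝ)..1, K t * f (x + h * t)) (𝓝[>] 0)
      (𝓝 (iteratedDeriv n f x / n ! * ∫ t in (-1:ℝ)..1, K t * t ^ n)) := by
  set a : ℕ → ℝ := fun p => iteratedDeriv p f x / (p ! : ℝ)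
  set R : ℝ → ℝ := fun u => f (x + u) - ∑ p ∈ range (n + 1), a p * u ^ p
  have hsplit : ∀ᶠ h in 𝓝[>] 0, (h ^ n)⁻¹ * ∫ t in (-1:ℝ)..1, K t * f (x + h * t)
      = a n * (∫ t in (-1:ℝ)..1, K t * t ^ n)
        + (h ^ n)⁻¹ * ∫ t in (-1:ℝ)..1, K t * R (h * t) := by
    filter_upwards [Ioo_mem_nhdsGT hε] with h ⟨hh0, hhε⟩
    have hfcont : ContinuousOn (fun t => f (x + h * t)) (Set.uIcc (-1) 1) := by
      refine hf.continuousOn.comp (by fun_prop) fun t ht => ?_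
      rw [Set.uIcc_of_le (by norm_num)] at ht
      rw [Metric.mem_ball, dist_eq, add_sub_cancel_left, abs_mul, abs_of_pos hh0]
      nlinarith [abs_le.2 ht]
    have htaylor : Continuous fun t => ∑ p ∈ range (n + 1), a p * (h * t) ^ p := by fun_prop
    have hremainder : ContinuousOn (fun t => R (h * t)) (Set.uIcc (-1) 1) :=
      hfcont.sub htaylor.continuousOn
    have hdecomp : ∀ t, K t * f (x + h * t)
        = K t * ∑ p ∈ range (n + 1), a p * (h * t) ^ p + K t * R (h * t) := fun t => by
      simp only [R]; ring
    simp only [hdecomp]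
    rw [integral_add (hK.mul_continuousOn htaylor.continuousOn)
      (hK.mul_continuousOn hremainder),
      integral_mul_sum_pow_of_moments_eq_zero hK hmom, mul_add]
    field_simp
  have herror : Tendsto (fun h => (h ^ n)⁻¹ * ∫ t in (-1:ℝ)..1, K t * R (h * t)) (𝓝[>] 0)
      (𝓝 0) := by
    refine ((isLittleO_integral_mul_comp_mul hK
      (isLittleO_sub_taylor_comp_add hε hf)).tendsto_div_nhds_zero).congr fun h => ?_
    rw [div_eq_inv_mul]
  simpa only [add_zero] using
    (tendsto_const_nhds.add herror).congr' (hsplit.mono fun _ => Eq.symm)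

end MomentKernel

theorem stmt1 (n m : ℕ) (hn : 1 ≤ n) (x : ℝ) (f : ℝ → ℝ)
    (hf : ∃ ε > (0:ℝ), ContDiffOn ℝ ((n : ℕ) : ℕ∞) f (Metric.ball x ε)) :
    Filter.Tendsto
      (fun h : ℝ => (-(1/h)) ^ n * ∫ t in (-1:ℝ)..1, kker n m t * f (x + h*t))
      (nhdsWithin (0:ℝ) (Set.Ioi 0)) (nhds (iteratedDeriv n f x)) := by
  obtain ⟨ε, hε, hf⟩ := hf
  have hlim := tendsto_integral_mul_comp_div_pow ((continuous_kker n m).intervalIntegrable _ _)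
    (fun p hp => integral_kker_mul_pow_of_lt m hp) hε (by exact_mod_cast hf)
  rw [integral_kker_mul_pow_self m hn] at hlim
  convert hlim.const_mul ((-1) ^ n) using 2
  · rw [neg_pow, one_div, inv_pow, mul_assoc]
  · field_simp
    rw [← pow_mul, pow_mul', neg_one_sq, one_pow, mul_one]
end

section
/- Let $n \geq 0$ and $j \geq 0$ be integers. The value at $0$ of the $n$-th derivative of the Legendre polynomial of degree $n+2j$ is $$P_{n+2j}^{(n)}(0) = (n+2j+1)_n\,\frac{(-1)^j}{2^{2j+n}}\binom{2j+n}{j},$$ where $(a)_k = a(a+1)\cdots(a+k-1)$ is the Pochhammer symbol. -/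
open Real Filter Finset

noncomputable def poch (a : ℝ) (k : ℕ) : ℝ := (ascPochhammer ℝ k).eval a

/-! By Rodrigues' formula, `P_N^{(n)}(0)` is `(2^N N!)⁻¹` times the `(n + N)`-th derivative of
`(x² - 1)^N` at `0`, that is `(n + N)!` times the coefficient of `x^{n+N}` in `(x² - 1)^N`. For
`N = n + 2j` this is `x^{2(n+j)}`, whose coefficient is `(-1)^j C(N, n+j)` by the binomial theorem,
and `(n + N)! / N!` is the Pochhammer symbol `(N + 1)_n`. -/

open Polynomial Nat

theorem iteratedDeriv_polynomial_eval {𝕜 : Type*} [NontriviallyNormedField 𝕜]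
    (p : 𝕜[X]) (k : ℕ) :
    iteratedDeriv k (fun x => p.eval x) = fun x => (derivative^[k] p).eval x := by
  induction k with
  | zero => simp
  | succ k ih =>
    rw [iteratedDeriv_succ, ih, Function.iterate_succ_apply']
    exact funext fun x => Polynomial.deriv _

theorem eval_zero_iterate_derivative {R : Type*} [Semiring R] (p : R[X]) (k : ℕ) :
    (derivative^[k] p).eval 0 = k ! * p.coeff k := by
  rw [← coeff_zero_eq_eval_zero, coeff_iterate_derivative, zero_add, descFactorial_self,
    nsmul_eq_mul]

theorem coeff_X_sq_sub_one_pow_two_mul {R : Type*} [CommRing R] (N m : ℕ) :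
    ((X ^ 2 - 1 : R[X]) ^ N).coeff (2 * m) = (-1) ^ (N - m) * N.choose m := by
  have hexpand : (X ^ 2 - 1 : R[X]) ^ N = expand R 2 ((X + C (-1)) ^ N) := by
    simp [sub_eq_add_neg]
  rw [hexpand, coeff_expand_mul' two_pos, coeff_X_add_C_pow]

theorem iteratedDeriv_legendreP (N k : ℕ) (x : ℝ) :
    iteratedDeriv k (legendreP N) x =
      (derivative^[k + N] ((X ^ 2 - 1 : ℝ[X]) ^ N)).eval x / (2 ^ N * N !) := by
  have hrodrigues : legendreP N = fun x =>
      (C (1 / (2 ^ N * N ! : ℝ)) * derivative^[N] ((X ^ 2 - 1 : ℝ[X]) ^ N)).eval x := by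
    have hpoly : (fun y : ℝ => (y ^ 2 - 1) ^ N) = fun y => ((X ^ 2 - 1 : ℝ[X]) ^ N).eval y := by
      simp
    funext x
    simp only [legendreP, hpoly, iteratedDeriv_polynomial_eval, eval_mul, eval_C]
  rw [hrodrigues, iteratedDeriv_polynomial_eval, iterate_derivative_C_mul,
    ← Function.iterate_add_apply]
  simp only [eval_mul, eval_C]
  ring

theorem poch_natCast (m k : ℕ) : poch m k = m.ascFactorial k := by
  rw [poch, ← ascPochhammer_eval_cast, ascPochhammer_nat_eq_ascFactorial]

theorem stmt5 (n j : ℕ) :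
    iteratedDeriv n (legendreP (n + 2*j)) 0 =
      poch ((n:ℝ) + 2*(j:ℝ) + 1) n * ((-1:ℝ)^j / (2:ℝ)^(2*j + n)) *
        (Nat.choose (2*j + n) j : ℝ) := by
  set N := 2 * j + n
  have hN : n + 2 * j = N := by omega
  have hdeg : n + N = 2 * (n + j) := by omega
  have hsign : N - (n + j) = j := by omega
  have hchoose : N.choose (n + j) = N.choose j := by
    rw [show N = (n + j) + j by omega, choose_symm_add]
  have hfact : ((2 * (n + j)) ! : ℝ) = N ! * (N + 1).ascFactorial n := by
    rw [← hdeg, add_comm n]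
    exact_mod_cast (factorial_mul_ascFactorial N n).symm
  have hpoch : poch ((n:ℝ) + 2*(j:ℝ) + 1) n = (N + 1).ascFactorial n := by
    rw [← poch_natCast]
    congr 1
    push_cast [N]
    ring
  rw [hN, iteratedDeriv_legendreP, hdeg, eval_zero_iterate_derivative,
    coeff_X_sq_sub_one_pow_two_mul, hsign, hchoose, hpoch, hfact]
  field_simp
end

section
/- Let $n \geq 0$ and $m \geq 0$ be integers. Then $$\sum_{k=0}^m \frac{(-m)_k\,\left(m+n+\tfrac{3}{2}\right)_k}{\left(\tfrac{3}{2}\right)_k\,k!}\,\frac{\Gamma\!\left(k+\tfrac{1}{2}\right)}{\Gamma\!\left(k+n+\tfrac{3}{2}\right)} = \frac{\pi\,\Gamma(m+1)\,\Gamma(m+n+1)}{2\,\Gamma(n+1)\,\Gamma\!\left(m+n+\tfrac{3}{2}\right)\Gamma\!\left(m+\tfrac{3}{2}\right)}.$$ -/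
/-!
After writing the Gamma quotients as Pochhammer symbols, the sum is the balanced terminating
series `₃F₂(-m, a + m, b; b + 1, a; 1)` with `a = n + 3/2`, `b = 1/2`, times `√π / Γ(a)`.
By the Pfaff–Saalschütz theorem it equals `m! (a - b)_m / ((b + 1)_m (a)_m)`. We prove this
closed form by the WZ method: a rational certificate makes the difference between the summand
at `m + 1` and `ρ m` times the summand at `m` telescope in `k`, so the sums satisfy the same
first-order recurrence in `m` as the closed form.
-/

open Real Finset

lemma poch_zero (a : ℝ) : poch a 0 = 1 := by simp [poch]

lemma poch_succ (a : ℝ) (k : ℕ) : poch a (k + 1) = poch a k * (a + k) :=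
  ascPochhammer_succ_eval k a

lemma poch_mul_add (a : ℝ) (k : ℕ) : poch a k * (a + k) = a * poch (a + 1) k := by
  rw [← poch_succ, poch, ascPochhammer_succ_left]
  simp [poch, Polynomial.eval_comp]

lemma poch_pos {a : ℝ} (ha : 0 < a) (k : ℕ) : 0 < poch a k := ascPochhammer_pos k a ha

lemma poch_neg_natCast_of_lt {m k : ℕ} (h : m < k) : poch (-(m : ℝ)) k = 0 :=
  ascPochhammer_eval_neg_coe_nat_of_lt h

lemma Gamma_three_halves : Gamma (3 / 2) = √π / 2 := by
  rw [show (3 / 2 : ℝ) = 1 / 2 + 1 by norm_num, Gamma_add_one (by norm_num), Gamma_one_half_eq]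
  ring

lemma Gamma_natCast_add {x : ℝ} (hx : 0 < x) (k : ℕ) :
    Gamma (k + x) = poch x k * Gamma x := by
  induction k with
  | zero => simp [poch_zero]
  | succ k ih =>
    rw [Nat.cast_succ, add_right_comm, Gamma_add_one (by positivity), ih, poch_succ]
    ring

namespace PfaffSaalschutz

noncomputable def term (a b : ℝ) (m k : ℕ) : ℝ :=
  poch (-(m : ℝ)) k * poch (a + m) k * poch b k / (poch (b + 1) k * poch a k * k.factorial)

/-- Found by Zeilberger's algorithm: it makes `term a b (m + 1) k - ρ m * term a b m k`
telescope in `k`, where `ρ m = (m + 1) (a - b + m) / ((b + 1 + m) (a + m))` is the ratio of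
consecutive values of the closed form in `sum_range_term`. -/
noncomputable def certificate (a b : ℝ) (m k : ℕ) : ℝ :=
  -(2 * m + a + 1) * k * (k + b) * (k + a - 1) /
    ((m + 1 + b) * (m + 1) * (a + m) * (a + m + k)) * term a b (m + 1) k

variable {a b : ℝ}

lemma term_eq_zero_of_lt {m k : ℕ} (h : m < k) : term a b m k = 0 := by
  simp [term, poch_neg_natCast_of_lt h]

lemma term_succ_right (ha : 0 < a) (hb : 0 < b + 1) (m k : ℕ) :
    term a b m (k + 1) =
      (k - m) * (a + m + k) * (b + k) / ((b + 1 + k) * (a + k) * (k + 1)) * term a b m k := by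
  have := poch_pos hb k
  have := poch_pos ha k
  simp only [term, poch_succ, Nat.factorial_succ]
  push_cast
  field_simp
  ring

lemma term_mul_eq_term_succ_left (m k : ℕ) :
    (m + 1) * (a + m + k) * term a b m k = (m + 1 - k) * (a + m) * term a b (m + 1) k := by
  have hshift_neg :
      (m + 1 : ℝ) * poch (-(m : ℝ)) k = (m + 1 - k) * poch (-((m + 1 : ℕ) : ℝ)) k := by
    have := poch_mul_add (-((m + 1 : ℕ) : ℝ)) k
    push_cast at this ⊢
    rw [show -((m : ℝ) + 1) + 1 = -m by ring] at this
    linear_combination this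
  have hshift_add : (a + m + k) * poch (a + m) k = (a + m) * poch (a + (m + 1 : ℕ)) k := by
    rw [Nat.cast_succ, ← add_assoc, ← poch_mul_add]
    ring
  unfold term
  linear_combination (poch b k / (poch (b + 1) k * poch a k * k.factorial)) *
    ((a + m + k) * poch (a + m) k * hshift_neg +
      (m + 1 - k) * poch (-((m + 1 : ℕ) : ℝ)) k * hshift_add)

lemma term_sub_eq_certificate_sub (ha : 0 < a) (hb : 0 < b + 1) (m k : ℕ) :
    term a b (m + 1) k - (m + 1) * (a - b + m) / ((b + 1 + m) * (a + m)) * term a b m k =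
      certificate a b m (k + 1) - certificate a b m k := by
  have hleft :
      term a b m k = (m + 1 - k) * (a + m) / ((m + 1) * (a + m + k)) * term a b (m + 1) k := by
    rw [div_mul_eq_mul_div, eq_div_iff (by positivity), ← term_mul_eq_term_succ_left]
    ring
  have : 0 < m + 1 + b := by linarith
  rw [certificate, certificate, term_succ_right ha hb, hleft]
  push_cast
  field_simp
  ring

lemma sum_range_term (ha : 0 < a) (hb : 0 < b + 1) (m : ℕ) :
    ∑ k ∈ range (m + 1), term a b m k =
      m.factorial * poch (a - b) m / (poch (b + 1) m * poch a m) := by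
  induction m with
  | zero => simp [term, poch_zero]
  | succ m ih =>
    have htelescope : ∑ k ∈ range (m + 2),
        (term a b (m + 1) k - (m + 1) * (a - b + m) / ((b + 1 + m) * (a + m)) * term a b m k) =
          0 := by
      rw [sum_congr rfl fun k _ ↦ term_sub_eq_certificate_sub ha hb m k, sum_range_sub,
        certificate, certificate, term_eq_zero_of_lt (m := m + 1) (k := m + 2) (by omega)]
      simp
    rw [sum_sub_distrib, ← mul_sum, sum_range_succ (term a b m),
      term_eq_zero_of_lt (lt_add_one m), add_zero, ih, sub_eq_zero] at htelescope
    have := poch_pos hb m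
    have := poch_pos ha m
    rw [htelescope, poch_succ, poch_succ, poch_succ, Nat.factorial_succ]
    push_cast
    field_simp

end PfaffSaalschutz

open PfaffSaalschutz in
theorem stmt16 (n m : ℕ) :
    ∑ k ∈ Finset.range (m+1),
        poch (-(m:ℝ)) k * poch ((m:ℝ) + (n:ℝ) + 3/2) k /
            (poch (3/2) k * (Nat.factorial k : ℝ)) *
          (Real.Gamma ((k:ℝ) + 1/2) / Real.Gamma ((k:ℝ) + (n:ℝ) + 3/2)) =
      Real.pi * Real.Gamma ((m:ℝ) + 1) * Real.Gamma ((m:ℝ) + (n:ℝ) + 1) /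
        (2 * Real.Gamma ((n:ℝ) + 1) * Real.Gamma ((m:ℝ) + (n:ℝ) + 3/2) *
          Real.Gamma ((m:ℝ) + 3/2)) := by
  have hn : (0 : ℝ) < n + 3 / 2 := by positivity
  have hsummand (k : ℕ) :
      poch (-(m : ℝ)) k * poch (m + n + 3 / 2) k / (poch (3 / 2) k * k.factorial) *
          (Gamma (k + 1 / 2) / Gamma (k + n + 3 / 2)) =
        √π / Gamma (n + 3 / 2) * term (n + 3 / 2) (1 / 2) m k := by
    have := poch_pos hn k
    rw [show (k + n + 3 / 2 : ℝ) = k + (n + 3 / 2) by ring, Gamma_natCast_add hn,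
      Gamma_natCast_add (by norm_num), Gamma_one_half_eq, term,
      show (1 / 2 + 1 : ℝ) = 3 / 2 by norm_num,
      show (n + 3 / 2 + m : ℝ) = m + n + 3 / 2 by ring]
    field_simp
  have hΓmn1 : Gamma (m + n + 1) = poch (n + 1) m * n.factorial := by
    rw [add_assoc, Gamma_natCast_add (by positivity), Gamma_nat_eq_factorial]
  have hΓmn32 : Gamma (m + n + 3 / 2) = poch (n + 3 / 2) m * Gamma (n + 3 / 2) := by
    rw [add_assoc, Gamma_natCast_add hn]
  have hΓm32 : Gamma (m + 3 / 2) = poch (3 / 2) m * (√π / 2) := by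
    rw [Gamma_natCast_add (by norm_num), Gamma_three_halves]
  rw [sum_congr rfl fun k _ ↦ hsummand k, ← mul_sum, sum_range_term hn (by norm_num), hΓmn1,
    hΓmn32, hΓm32, Gamma_nat_eq_factorial, Gamma_nat_eq_factorial,
    show (n + 3 / 2 - 1 / 2 : ℝ) = n + 1 by ring, show (1 / 2 + 1 : ℝ) = 3 / 2 by norm_num]
  have := poch_pos hn m
  have := poch_pos (show (0 : ℝ) < 3 / 2 by norm_num) m
  field_simp
  rw [sq_sqrt pi_pos.le]
  ring
end
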